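/- Correctness of the k-connectivity encoding Φ_k: let K = (V,E,ℓ) be a Kripke structure with symmetric edge relation E, let y be an atomic proposition labelling exactly one state t, let p_1,…,p_{k−1} be fresh atomic propositions, and let Φ_k := ∃p_1.…∃p_{k−1}.( ⋀_{1≤i<k} EX( E( p_i ∧ ⋀_{j≠i} ¬p_j ) U y ) ∧ EX( E( ⋀_{1≤i<k} ¬p_i ) U y ) ). Then for every state x, K,x ⊨ Φ_k if and only if there exist k pairwise internally disjoint paths from x to t. -/

import Mathlib

open Classical

/-- Syntax of QCTL: `φ ::= q | ¬φ | φ∨ψ | EX φ | E φ U ψ | A φ U ψ | ∃p.φ`. -/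
inductive QCTL (AP : Type) : Type where
  | atom : AP → QCTL AP
  | qneg : QCTL AP → QCTL AP
  | qor  : QCTL AP → QCTL AP → QCTL AP
  | qEX  : QCTL AP → QCTL AP
  | qEU  : QCTL AP → QCTL AP → QCTL AP
  | qAU  : QCTL AP → QCTL AP → QCTL AP
  | qexi : AP → QCTL AP → QCTL AP

/-- A Kripke structure over atomic propositions `AP` with (finite) state space `V`:
a serial edge relation and a labelling function. -/
structure Kripke (AP V : Type) where
  E : V → V → Prop
  serial : ∀ v, ∃ w, E v w
  label : V → Set AP

variable {AP V : Type}

/-- `K'` agrees with `K` (same edges) except possibly on the labelling of `p`. -/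
def Kripke.AgreeExcept (K K' : Kripke AP V) (p : AP) : Prop :=
  K'.E = K.E ∧ ∀ v q, q ≠ p → (q ∈ K'.label v ↔ q ∈ K.label v)

/-- Structure semantics of QCTL. -/
def QCTL.sat : QCTL AP → Kripke AP V → V → Prop
  | .atom p, K, x => p ∈ K.label x
  | .qneg φ, K, x => ¬ φ.sat K x
  | .qor φ ψ, K, x => φ.sat K x ∨ ψ.sat K x
  | .qEX φ, K, x => ∃ y, K.E x y ∧ φ.sat K y
  | .qEU φ ψ, K, x => ∃ ρ : ℕ → V, ρ 0 = x ∧ (∀ i, K.E (ρ i) (ρ (i + 1))) ∧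
      ∃ i, ψ.sat K (ρ i) ∧ ∀ j < i, φ.sat K (ρ j)
  | .qAU φ ψ, K, x => ∀ ρ : ℕ → V, ρ 0 = x → (∀ i, K.E (ρ i) (ρ (i + 1))) →
      ∃ i, ψ.sat K (ρ i) ∧ ∀ j < i, φ.sat K (ρ j)
  | .qexi p φ, K, x => ∃ K' : Kripke AP V, K.AgreeExcept K' p ∧ φ.sat K' x

namespace QCTL

def qand (φ ψ : QCTL AP) : QCTL AP := qneg (qor (qneg φ) (qneg ψ))
def qimp (φ ψ : QCTL AP) : QCTL AP := qor (qneg φ) ψ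
def qiff (φ ψ : QCTL AP) : QCTL AP := qand (qimp φ ψ) (qimp ψ φ)
def qtop [Inhabited AP] : QCTL AP := qor (atom default) (qneg (atom default))
def qbot [Inhabited AP] : QCTL AP := qneg qtop
def qAX (φ : QCTL AP) : QCTL AP := qneg (qEX (qneg φ))
def qEF [Inhabited AP] (φ : QCTL AP) : QCTL AP := qEU qtop φ
def qAG [Inhabited AP] (φ : QCTL AP) : QCTL AP := qneg (qEF (qneg φ))
def qall (p : AP) (φ : QCTL AP) : QCTL AP := qneg (qexi p (qneg φ))

/-- All atomic propositions occurring in a formula (free or bound). -/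
def atoms : QCTL AP → Set AP
  | atom p => {p}
  | qneg φ => φ.atoms
  | qor φ ψ => φ.atoms ∪ ψ.atoms
  | qEX φ => φ.atoms
  | qEU φ ψ => φ.atoms ∪ ψ.atoms
  | qAU φ ψ => φ.atoms ∪ ψ.atoms
  | qexi p φ => insert p φ.atoms

/-- Size of a formula. -/
def qsize : QCTL AP → ℕ
  | atom _ => 1
  | qneg φ => φ.qsize + 1
  | qor φ ψ => φ.qsize + ψ.qsize + 1
  | qEX φ => φ.qsize + 1
  | qEU φ ψ => φ.qsize + ψ.qsize + 1
  | qAU φ ψ => φ.qsize + ψ.qsize + 1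
  | qexi _ φ => φ.qsize + 1

end QCTL

/-- Equivalence of two QCTL formulas: same truth value at every state of every
(finite) Kripke structure. -/
def QEquiv (φ ψ : QCTL AP) : Prop :=
  ∀ (V : Type) [Fintype V] (K : Kripke AP V) (x : V), φ.sat K x ↔ ψ.sat K x

/-- `∃p₁.…∃pₙ.φ` for a list of atomic propositions. -/
def exiMany {AP : Type} (l : List AP) (φ : QCTL AP) : QCTL AP := l.foldr QCTL.qexi φ

/-- Conjunction of a list of formulas, with a final base conjunct. -/
def conjList {AP : Type} (l : List (QCTL AP)) (base : QCTL AP) : QCTL AP :=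
  l.foldr QCTL.qand base

/-- Disjunction of a list of formulas, with a final base disjunct. -/
def disjList {AP : Type} (l : List (QCTL AP)) (base : QCTL AP) : QCTL AP :=
  l.foldr QCTL.qor base
/-- The QCTL formula
`Φ_k := ∃p₁…p_{k−1}.( ⋀_{1≤i<k} EX( E(pᵢ ∧ ⋀_{j≠i}¬pⱼ) U y ) ∧ EX( E(⋀ᵢ¬pᵢ) U y ) )`. -/
def PhiConn {AP : Type} [Inhabited AP] (k : ℕ) (p : Fin (k - 1) → AP) (yA : AP) : QCTL AP :=
  exiMany ((List.finRange (k - 1)).map p)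
    (conjList
      ((List.finRange (k - 1)).map fun i =>
        QCTL.qEX (QCTL.qEU
          (conjList
            (((List.finRange (k - 1)).filter (fun j => decide (j ≠ i))).map
              fun j => QCTL.qneg (QCTL.atom (p j)))
            (QCTL.atom (p i)))
          (QCTL.atom yA)))
      (QCTL.qEX (QCTL.qEU
        (conjList ((List.finRange (k - 1)).map fun j => QCTL.qneg (QCTL.atom (p j)))
          QCTL.qtop)
        (QCTL.atom yA))))


/-!
The fresh propositions `p₁, …, p_{k-1}` act as a colouring of the states by subsets of
`{1, …, k-1}`: the `i`-th conjunct of `Φ_k` asks for a path to `t` whose internal states are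
coloured exactly `{i}`, the last one for a path whose internal states are uncoloured. Paths of
distinct colours are internally disjoint; conversely, `k` internally disjoint paths are coloured
by giving the internal states of the `i`-th path the colour `{i}` for `i < k` and leaving those
of the last path uncoloured. The finite paths of the statement and the infinite paths of the
CTL semantics are interchangeable because the edge relation is serial.
-/

open Function in
theorem Equiv.exists_pairwise_congr {ι κ α : Type*} (e : ι ≃ κ) (S : α → Prop) (r : α → α → Prop) :
    (∃ P : ι → α, (∀ i, S (P i)) ∧ Pairwise (r on P)) ↔
      ∃ P : κ → α, (∀ i, S (P i)) ∧ Pairwise (r on P) := by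
  constructor
  · rintro ⟨P, hS, hr⟩
    exact ⟨P ∘ e.symm, fun i => hS _, hr.comp_of_injective e.symm.injective⟩
  · rintro ⟨P, hS, hr⟩
    exact ⟨P ∘ e, fun i => hS _, hr.comp_of_injective e.injective⟩

open Function in
theorem exists_pairwise_disjoint_option_iff_colouring {ι : Type*} (S : List V → Prop) :
    (∃ P : Option ι → List V, (∀ i, S (P i)) ∧ Pairwise (List.Disjoint on P)) ↔
      ∃ c : V → Set ι, (∀ i, ∃ l, S l ∧ ∀ u ∈ l, c u = {i}) ∧ ∃ l, S l ∧ ∀ u ∈ l, c u = ∅ := by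
  constructor
  · rintro ⟨P, hS, hP⟩
    refine ⟨fun u => {i | u ∈ P (some i)}, fun i => ⟨P (some i), hS _, fun u hu => ?_⟩,
      P none, hS _, fun u hu => ?_⟩
    · ext j
      refine ⟨fun hj => by_contra fun hji => hP (by simpa using hji) hj hu, ?_⟩
      rintro rfl
      exact hu
    · ext j
      exact ⟨fun hj => hP (Option.some_ne_none j) hj hu, False.elim⟩
  · rintro ⟨c, hsome, l₀, hl₀, hc₀⟩
    choose l hl hc using hsome
    let colour : Option ι → Set ι := fun o => o.elim ∅ ({·})
    have hcolour : ∀ o, ∀ u ∈ o.elim l₀ l, c u = colour o := by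
      rintro (_ | i)
      exacts [hc₀, hc i]
    have hinj : colour.Injective := by
      rintro (_ | i) (_ | j) h <;> simp_all [colour, eq_comm]
    refine ⟨fun o => o.elim l₀ l, by rintro (_ | i) <;> simp [hl₀, hl], fun o o' hne u hu hu' =>
      hne (hinj ((hcolour o u hu).symm.trans (hcolour o' u hu')))⟩

lemma exists_label_preimage_eq {ι : Type*} {p : ι → AP} (hp : p.Injective) (K₀ : V → Set AP)
    (c : V → Set ι) : ∃ L : V → Set AP,
      (∀ v q, q ∉ Set.range p → (q ∈ L v ↔ q ∈ K₀ v)) ∧ ∀ v, p ⁻¹' L v = c v := by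
  refine ⟨fun v => p '' c v ∪ (K₀ v \ Set.range p), fun v q hq => ?_, fun v => ?_⟩
  · have : q ∉ p '' c v := fun h => hq (Set.image_subset_range _ _ h)
    simp [hq, this]
  · ext i
    simp [hp.eq_iff]

namespace Kripke

def relabel (K : Kripke AP V) (L : V → Set AP) : Kripke AP V := { K with label := L }

@[simp]
lemma relabel_label (K : Kripke AP V) (L : V → Set AP) : (K.relabel L).label = L := rfl

@[simp]
lemma relabel_E (K : Kripke AP V) (L : V → Set AP) : (K.relabel L).E = K.E := rfl

@[simp]
lemma relabel_relabel (K : Kripke AP V) (L L' : V → Set AP) :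
    (K.relabel L).relabel L' = K.relabel L' := rfl

lemma relabel_label_of_E_eq {K K' : Kripke AP V} (h : K'.E = K.E) : K.relabel K'.label = K' := by
  obtain ⟨E', serial', label'⟩ := K'
  subst h
  rfl

end Kripke

namespace QCTL

lemma sat_qand (φ ψ : QCTL AP) (K : Kripke AP V) (x : V) :
    (qand φ ψ).sat K x ↔ φ.sat K x ∧ ψ.sat K x := by
  simp only [qand, sat, not_or, not_not]

lemma sat_qtop [Inhabited AP] (K : Kripke AP V) (x : V) : (qtop : QCTL AP).sat K x :=
  Classical.em _

lemma sat_conjList (l : List (QCTL AP)) (base : QCTL AP) (K : Kripke AP V) (x : V) :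
    (conjList l base).sat K x ↔ (∀ φ ∈ l, φ.sat K x) ∧ base.sat K x := by
  induction l with
  | nil => simp [conjList]
  | cons φ l ih =>
    rw [conjList, List.foldr_cons, sat_qand, ← conjList, ih, List.forall_mem_cons, and_assoc]

lemma sat_qexi (q : AP) (φ : QCTL AP) (K : Kripke AP V) (x : V) :
    (qexi q φ).sat K x ↔ ∃ L : V → Set AP,
      (∀ v r, r ≠ q → (r ∈ L v ↔ r ∈ K.label v)) ∧ φ.sat (K.relabel L) x := by
  constructor
  · rintro ⟨K', ⟨hE, hL⟩, h⟩
    exact ⟨K'.label, hL, by rwa [Kripke.relabel_label_of_E_eq hE]⟩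
  · rintro ⟨L, hL, h⟩
    exact ⟨K.relabel L, ⟨rfl, hL⟩, h⟩

lemma sat_exiMany (l : List AP) (φ : QCTL AP) (K : Kripke AP V) (x : V) :
    (exiMany l φ).sat K x ↔ ∃ L : V → Set AP,
      (∀ v r, r ∉ l → (r ∈ L v ↔ r ∈ K.label v)) ∧ φ.sat (K.relabel L) x := by
  induction l generalizing K with
  | nil =>
    constructor
    · exact fun h => ⟨K.label, fun _ _ _ => Iff.rfl, h⟩
    · rintro ⟨L, hL, h⟩
      obtain rfl : L = K.label := funext fun v => Set.ext fun r => hL v r List.not_mem_nil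
      exact h
  | cons q l ih =>
    change (qexi q (exiMany l φ)).sat K x ↔ _
    simp only [sat_qexi, ih, Kripke.relabel_label, Kripke.relabel_relabel, List.mem_cons, not_or]
    constructor
    · rintro ⟨L₁, hL₁, L, hL, h⟩
      exact ⟨L, fun v r hr => (hL v r hr.2).trans (hL₁ v r hr.1), h⟩
    · rintro ⟨L, hL, h⟩
      refine ⟨fun v => {r | r ∈ if r = q then L v else K.label v}, fun v r hr => ?_, L,
        fun v r hr => ?_, h⟩
      · simp [hr]
      · by_cases hrq : r = q
        · simp [hrq]
        · simpa [hrq] using hL v r ⟨hrq, hr⟩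

end QCTL

section Paths

variable {R : V → V → Prop}

lemma isChain_cons_map_range {ρ : ℕ → V} (hρ : ∀ i, R (ρ i) (ρ (i + 1))) {x : V}
    (hx : R x (ρ 0)) (n : ℕ) : (x :: ((List.range n).map ρ ++ [ρ n])).IsChain R := by
  rw [← List.map_singleton, ← List.map_append, ← List.range_succ, List.range_succ_eq_map,
    List.map_cons, List.isChain_cons_cons, ← List.map_cons, ← List.range_succ_eq_map,
    List.isChain_map, List.isChain_range_succ]
  exact ⟨hx, fun m _ => hρ m⟩

lemma exists_seq_of_isChain_cons (hR : ∀ v, ∃ w, R v w) :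
    ∀ {v : V} {l : List V}, (v :: l).IsChain R → ∃ ρ : ℕ → V, ρ 0 = v ∧
      (∀ i, R (ρ i) (ρ (i + 1))) ∧ ∀ i (hi : i < l.length), ρ (i + 1) = l[i]
  | v, [], _ => by
    choose next hnext using hR
    refine ⟨fun n => next^[n] v, rfl, fun i => ?_, fun i hi => absurd hi (Nat.not_lt_zero i)⟩
    simpa only [Function.iterate_succ_apply'] using hnext _
  | v, w :: l, h => by
    obtain ⟨hvw, hw⟩ := List.isChain_cons_cons.mp h
    obtain ⟨ρ, hρ0, hρ, hρl⟩ := exists_seq_of_isChain_cons hR hw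
    refine ⟨fun | 0 => v | n + 1 => ρ n, rfl,
      fun | 0 => show R v (ρ 0) by rwa [hρ0] | i + 1 => hρ i, ?_⟩
    rintro (_ | i) hi
    · exact hρ0
    · exact hρl i (Nat.lt_of_succ_lt_succ hi)

end Paths

lemma QCTL.sat_qEX_qEU_atom_iff {K : Kripke AP V} {y : AP} {t : V}
    (hy : ∀ v, y ∈ K.label v ↔ v = t) (φ : QCTL AP) (x : V) :
    (qEX (qEU φ (atom y))).sat K x ↔
      ∃ l : List V, (x :: (l ++ [t])).IsChain K.E ∧ ∀ u ∈ l, φ.sat K u := by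
  constructor
  · rintro ⟨_, hx, ρ, rfl, hρ, n, hyn, hφ⟩
    obtain rfl : ρ n = t := (hy _).mp hyn
    refine ⟨(List.range n).map ρ, isChain_cons_map_range hρ hx n, ?_⟩
    simp only [List.mem_map, List.mem_range, forall_exists_index, and_imp]
    rintro _ j hj rfl
    exact hφ j hj
  · rintro ⟨l, hl, hφ⟩
    obtain ⟨ρ, rfl, hρ, hρl⟩ := exists_seq_of_isChain_cons K.serial hl
    refine ⟨ρ 1, hρ 0, fun n => ρ (n + 1), rfl, fun i => hρ (i + 1), l.length, ?_, fun j hj => ?_⟩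
    · change y ∈ K.label _
      simp [hρl l.length (by simp), hy]
    · simpa [hρl j (by simp; omega), List.getElem_append_left hj] using hφ _ (List.getElem_mem hj)

lemma sat_phiConn_iff [Inhabited AP] {K : Kripke AP V} {yA : AP} {t : V}
    (hy : ∀ v, yA ∈ K.label v ↔ v = t) {k : ℕ} {p : Fin (k - 1) → AP} (hpy : ∀ i, p i ≠ yA)
    (x : V) :
    (PhiConn k p yA).sat K x ↔ ∃ L : V → Set AP,
      (∀ v q, q ∉ Set.range p → (q ∈ L v ↔ q ∈ K.label v)) ∧
      (∀ i, ∃ l : List V, (x :: (l ++ [t])).IsChain K.E ∧ ∀ u ∈ l, p ⁻¹' L u = {i}) ∧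
      ∃ l : List V, (x :: (l ++ [t])).IsChain K.E ∧ ∀ u ∈ l, p ⁻¹' L u = ∅ := by
  have hrange : ∀ q, q ∈ (List.finRange (k - 1)).map p ↔ q ∈ Set.range p := by simp
  simp only [PhiConn, QCTL.sat_exiMany, hrange]
  refine exists_congr fun L => and_congr_right fun hL => ?_
  have hyL : ∀ v, yA ∈ (K.relabel L).label v ↔ v = t := fun v =>
    (hL v yA (by rintro ⟨i, hi⟩; exact hpy i hi)).trans (hy v)
  simp only [QCTL.sat_conjList, List.forall_mem_map, QCTL.sat_qEX_qEU_atom_iff hyL]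
  simp only [List.mem_finRange, forall_const, List.mem_filter, true_and, decide_eq_true_eq,
    QCTL.sat, Kripke.relabel_label, Kripke.relabel_E, QCTL.sat_qtop, Set.mem_preimage,
    Set.eq_singleton_iff_unique_mem, Set.eq_empty_iff_forall_notMem, ne_eq, not_imp_not, and_comm]

theorem phiConn_correct_general {AP V : Type} [Inhabited AP]
    (K : Kripke AP V)
    (yA : AP) (t : V) (hy : ∀ v, yA ∈ K.label v ↔ v = t)
    (k : ℕ) (hk : 1 ≤ k) (p : Fin (k - 1) → AP)
    (hinj : Function.Injective p) (hpy : ∀ i, p i ≠ yA)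
    (x : V) :
    (PhiConn k p yA).sat K x ↔
      (∃ paths : Fin k → List V,
        (∀ i, List.Chain K.E x (paths i ++ [t])) ∧
        (∀ i j, i ≠ j → ∀ u, u ∈ paths i → u ∉ paths j)) := by
  let e : Fin k ≃ Option (Fin (k - 1)) :=
    (finCongr (Nat.sub_add_cancel hk).symm).trans (finSuccEquiv (k - 1))
  let IsPath : List V → Prop := fun l => (x :: (l ++ [t])).IsChain K.E
  change _ ↔ ∃ paths : Fin k → List V,
    (∀ i, IsPath (paths i)) ∧ Pairwise (Function.onFun List.Disjoint paths)
  rw [sat_phiConn_iff hy hpy, e.exists_pairwise_congr IsPath,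
    exists_pairwise_disjoint_option_iff_colouring IsPath]
  constructor
  · rintro ⟨L, -, hpaths⟩
    exact ⟨_, hpaths⟩
  · rintro ⟨c, hpaths⟩
    obtain ⟨L, hL, hLc⟩ := exists_label_preimage_eq hinj K.label c
    exact ⟨L, hL, by simpa only [hLc] using hpaths⟩

/-- Correctness of the `k`-connectivity encoding `Φ_k`: over a Kripke structure with a
symmetric edge relation in which the atom `y` labels exactly the state `t`, and with the
`pᵢ` fresh, `Φ_k` holds at `x` iff there are `k` pairwise internally disjoint paths from
`x` to `t` (a path being given by its list of internal vertices). -/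
theorem phiConn_correct {AP V : Type} [Inhabited AP] [Fintype V]
    (K : Kripke AP V) (hsym : ∀ a b, K.E a b → K.E b a)
    (yA : AP) (t : V) (hy : ∀ v, yA ∈ K.label v ↔ v = t)
    (k : ℕ) (hk : 1 ≤ k) (p : Fin (k - 1) → AP)
    (hinj : Function.Injective p) (hpy : ∀ i, p i ≠ yA)
    (hfresh : ∀ i v, p i ∉ K.label v) (x : V) :
    (PhiConn k p yA).sat K x ↔
      (∃ paths : Fin k → List V,
        (∀ i, List.Chain K.E x (paths i ++ [t])) ∧
        (∀ i j, i ≠ j → ∀ u, u ∈ paths i → u ∉ paths j)) :=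
  phiConn_correct_general K yA t hy k hk p hinj hpy x
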